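/- arXiv:0906.2487 — 5 statements merged into one kernel-verified Lean document; each statement's English description precedes it below -/
import Mathlib

section
/- For every real β ≥ 1/3 and every x > 0, one has β x² − x / tanh(x) ≥ −1. -/
/-! Write `x / tanh x = x cosh x / sinh x`. The function `(1 + x²/3) sinh x - x cosh x` vanishes
at `0` and has derivative `x/3 · (x cosh x - sinh x)`, which is nonnegative for `x ≥ 0` because
`x cosh x - sinh x` itself vanishes at `0` with derivative `x sinh x ≥ 0`. Hence
`x / tanh x ≤ 1 + x²/3 ≤ 1 + β x²` whenever `β ≥ 1/3`. -/

open Real Set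

lemma apply_zero_le_of_hasDerivAt_nonneg {f f' : ℝ → ℝ} (hf : ∀ y, HasDerivAt f (f' y) y)
    (hf' : ∀ y, 0 < y → 0 ≤ f' y) {x : ℝ} (hx : 0 ≤ x) : f 0 ≤ f x := by
  refine monotoneOn_of_hasDerivWithinAt_nonneg (convex_Ici 0)
    (fun y _ ↦ (hf y).continuousAt.continuousWithinAt) (fun y _ ↦ (hf y).hasDerivWithinAt)
    (fun y hy ↦ hf' y ?_) self_mem_Ici hx hx
  rwa [interior_Ici] at hy

lemma sinh_le_mul_cosh {x : ℝ} (hx : 0 ≤ x) : sinh x ≤ x * cosh x := by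
  have hderiv (y : ℝ) : HasDerivAt (fun y ↦ y * cosh y - sinh y) (y * sinh y) y :=
    ((hasDerivAt_id' y).mul (hasDerivAt_cosh y)).sub (hasDerivAt_sinh y) |>.congr_deriv (by ring)
  have := apply_zero_le_of_hasDerivAt_nonneg hderiv
    (fun y hy ↦ mul_nonneg hy.le (sinh_nonneg_iff.mpr hy.le)) hx
  simpa using this

lemma mul_cosh_le_one_add_sq_div_three_mul_sinh {x : ℝ} (hx : 0 ≤ x) :
    x * cosh x ≤ (1 + x ^ 2 / 3) * sinh x := by
  have hderiv (y : ℝ) : HasDerivAt (fun y ↦ (1 + y ^ 2 / 3) * sinh y - y * cosh y)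
      (y / 3 * (y * cosh y - sinh y)) y :=
    ((((hasDerivAt_pow 2 y).div_const 3).const_add 1).mul (hasDerivAt_sinh y)).sub
      ((hasDerivAt_id' y).mul (hasDerivAt_cosh y)) |>.congr_deriv (by push_cast; ring)
  have := apply_zero_le_of_hasDerivAt_nonneg hderiv
    (fun y hy ↦ mul_nonneg (div_nonneg hy.le zero_le_three)
      (sub_nonneg.mpr (sinh_le_mul_cosh hy.le))) hx
  simpa using this

lemma div_tanh_le_one_add_sq_div_three {x : ℝ} (hx : 0 < x) : x / tanh x ≤ 1 + x ^ 2 / 3 := by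
  rw [tanh_eq_sinh_div_cosh, div_div_eq_mul_div, div_le_iff₀ (sinh_pos_iff.mpr hx)]
  exact mul_cosh_le_one_add_sq_div_three_mul_sinh hx.le

theorem stmt0 (β : ℝ) (hβ : 1/3 ≤ β) (x : ℝ) (hx : 0 < x) :
    β * x ^ 2 - x / Real.tanh x ≥ -1 := by
  have hquad : x ^ 2 / 3 ≤ β * x ^ 2 := by nlinarith [sq_nonneg x]
  linarith [div_tanh_le_one_add_sq_div_three hx]
end

section
/- Let β > 1/3. The function f(x) = βx² − x·cosh(x)/sinh(x) is nondecreasing on (0, ∞). -/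
/-!
The derivative of `β x² - x coth x` is `2βx - (sinh x cosh x - x) / sinh² x`, so it suffices
that `sinh x cosh x - x ≤ (2/3) x sinh² x` for `x ≥ 0`. The difference of the two sides vanishes
at `0` and, using `cosh² = 1 + sinh²`, has derivative `(4/3) sinh x (x cosh x - sinh x)`, whose
last factor is nonnegative by the same argument (its derivative is `x sinh x`).
-/

open Real Set

lemma nonneg_of_hasDerivAt_of_map_zero {g g' : ℝ → ℝ} (hg : ∀ x, HasDerivAt g (g' x) x)
    (hg' : ∀ x, 0 < x → 0 ≤ g' x) (h₀ : g 0 = 0) {x : ℝ} (hx : 0 ≤ x) : 0 ≤ g x := by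
  have hmono : MonotoneOn g (Ici 0) :=
    monotoneOn_of_hasDerivWithinAt_nonneg (convex_Ici 0)
      (fun y _ => (hg y).continuousAt.continuousWithinAt)
      (fun y _ => (hg y).hasDerivWithinAt)
      (fun y hy => hg' y (by simpa using hy))
  simpa [h₀] using hmono self_mem_Ici hx hx

lemma sinh_mul_cosh_sub_le {x : ℝ} (hx : 0 ≤ x) :
    sinh x * cosh x - x ≤ 2 / 3 * x * sinh x ^ 2 := by
  have hderiv (y : ℝ) : HasDerivAt (fun x => 2 / 3 * x * sinh x ^ 2 - (sinh x * cosh x - x))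
      (4 / 3 * sinh y * (y * cosh y - sinh y)) y := by
    refine (((hasDerivAt_id' y).const_mul (2 / 3)).mul ((hasDerivAt_sinh y).pow 2)).sub
      (((hasDerivAt_sinh y).mul (hasDerivAt_cosh y)).sub (hasDerivAt_id' y)) |>.congr_deriv ?_
    simp only [Pi.pow_apply]
    linear_combination (-1 : ℝ) * cosh_sq y
  have := nonneg_of_hasDerivAt_of_map_zero hderiv
    (fun y hy => mul_nonneg (mul_nonneg (by norm_num) (sinh_nonneg_iff.mpr hy.le))
      (sub_nonneg.mpr (sinh_le_mul_cosh hy.le))) (by simp) hx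
  linarith

lemma hasDerivAt_mul_cosh_div_sinh {x : ℝ} (hx : x ≠ 0) :
    HasDerivAt (fun x => x * cosh x / sinh x) ((sinh x * cosh x - x) / sinh x ^ 2) x := by
  refine ((hasDerivAt_id' x).mul (hasDerivAt_cosh x)).div (hasDerivAt_sinh x)
    (sinh_ne_zero.mpr hx) |>.congr_deriv ?_
  simp only [Pi.mul_apply]
  linear_combination (-x / sinh x ^ 2) * cosh_sq x

theorem stmt3 (β : ℝ) (hβ : 1/3 < β) :
    MonotoneOn (fun x : ℝ => β * x ^ 2 - x * Real.cosh x / Real.sinh x) (Set.Ioi 0) := by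
  have hderiv (x : ℝ) (hx : 0 < x) : HasDerivAt (fun x => β * x ^ 2 - x * cosh x / sinh x)
      (β * (2 * x) - (sinh x * cosh x - x) / sinh x ^ 2) x := by
    refine ((hasDerivAt_pow 2 x).const_mul β).sub (hasDerivAt_mul_cosh_div_sinh hx.ne')
      |>.congr_deriv ?_
    ring
  refine monotoneOn_of_hasDerivWithinAt_nonneg (convex_Ioi 0)
    (fun x hx => (hderiv x hx).continuousAt.continuousWithinAt)
    (fun x hx => (hderiv x (by simpa using hx)).hasDerivWithinAt) fun x hx => ?_
  rw [interior_Ioi, mem_Ioi] at hx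
  have hsinh : 0 < sinh x ^ 2 := pow_pos (sinh_pos_iff.mpr hx) 2
  have hquot : (sinh x * cosh x - x) / sinh x ^ 2 ≤ 2 / 3 * x := by
    rw [div_le_iff₀ hsinh]
    exact sinh_mul_cosh_sub_le hx.le
  nlinarith
end

section
/- There exists a constant C > 0 such that for every ω ≥ 0: ∫_{-1}^{0} cosh²(ω(z+1)) dz ≤ C · cosh²(ω) / (1 + ω). -/
/-!
Substituting `t = ω (z + 1)` turns `ω` times the integral into `∫₀^ω cosh² = (ω + sinh ω cosh ω) / 2`,
which is at most `cosh² ω`; the integral itself is also at most `cosh² ω` since `cosh (ω (z + 1)) ≤ cosh ω`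
on `[-1, 0]`. Adding the two bounds gives the constant `C = 2`.
-/

open Real

theorem integral_cosh_sq (x : ℝ) : ∫ t in (0 : ℝ)..x, cosh t ^ 2 = (x + sinh x * cosh x) / 2 := by
  have hderiv : ∀ t ∈ Set.uIcc 0 x,
      HasDerivAt (fun t => (t + sinh t * cosh t) / 2) (cosh t ^ 2) t := by
    intro t _
    refine (((hasDerivAt_id t).add ((hasDerivAt_sinh t).mul (hasDerivAt_cosh t))).div_const 2)
      |>.congr_deriv ?_
    linear_combination -cosh_sq t / 2
  rw [intervalIntegral.integral_eq_sub_of_hasDerivAt hderiv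
    ((by fun_prop : Continuous fun t => cosh t ^ 2).intervalIntegrable _ _)]
  simp

theorem mul_integral_cosh_mul_add_one_sq (ω : ℝ) :
    ω * ∫ z in (-1 : ℝ)..0, cosh (ω * (z + 1)) ^ 2 = (ω + sinh ω * cosh ω) / 2 := by
  rw [intervalIntegral.integral_comp_add_right (fun t => cosh (ω * t) ^ 2),
    intervalIntegral.mul_integral_comp_mul_left (f := fun t => cosh t ^ 2)]
  norm_num [integral_cosh_sq]

theorem integral_cosh_mul_add_one_sq_le (ω : ℝ) :
    ∫ z in (-1 : ℝ)..0, cosh (ω * (z + 1)) ^ 2 ≤ cosh ω ^ 2 := by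
  calc ∫ z in (-1 : ℝ)..0, cosh (ω * (z + 1)) ^ 2 ≤ ∫ _ in (-1 : ℝ)..0, cosh ω ^ 2 := by
        refine intervalIntegral.integral_mono_on (by norm_num)
          (Continuous.intervalIntegrable (by fun_prop) _ _) intervalIntegrable_const ?_
        intro z ⟨hz₁, hz₀⟩
        gcongr
        rw [cosh_le_cosh, abs_mul]
        exact mul_le_of_le_one_right (abs_nonneg ω) (abs_le.2 ⟨by linarith, by linarith⟩)
    _ = cosh ω ^ 2 := by simp

theorem add_sinh_mul_cosh_le (ω : ℝ) (hω : 0 ≤ ω) : ω + sinh ω * cosh ω ≤ 2 * cosh ω ^ 2 := by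
  have h₁ : ω ≤ sinh ω := self_le_sinh_iff.2 hω
  have h₂ : sinh ω < cosh ω := sinh_lt_cosh ω
  have h₃ : 1 ≤ cosh ω := one_le_cosh ω
  nlinarith

theorem stmt4 : ∃ C : ℝ, 0 < C ∧ ∀ ω : ℝ, 0 ≤ ω →
    (∫ z in (-1 : ℝ)..0, Real.cosh (ω * (z + 1)) ^ 2) ≤ C * Real.cosh ω ^ 2 / (1 + ω) := by
  refine ⟨2, two_pos, fun ω hω => ?_⟩
  rw [le_div_iff₀ (by positivity), mul_add, mul_one, mul_comm]
  linarith [mul_integral_cosh_mul_add_one_sq ω, integral_cosh_mul_add_one_sq_le ω,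
    add_sinh_mul_cosh_le ω hω]
end

section
/- Let β > 1/3, α ≥ 1, γ ≥ 0, and let ξ, k be real numbers with ξ ≠ 0. Set s = √(ξ² + k²). Then β ξ² + β k² + α + γ − ξ² / (γ + tanh(s)·s) ≥ β k² + α + γ − 1. -/
/-! Since `s ↦ s tanh s` is monotone on `[0, ∞)` and `t = |ξ| ≤ s`, we get
`ξ² / (γ + s tanh s) ≤ t / tanh t`. The function `(3 + t²) sinh t - 3 t cosh t` vanishes at `0`
and has derivative `t (t cosh t - sinh t) ≥ 0`, so `t / tanh t ≤ 1 + t²/3 ≤ 1 + β ξ²` for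
`β ≥ 1/3`. -/

open Real Set

lemma monotoneOn_Ici_of_hasDerivAt_nonneg {f f' : ℝ → ℝ} {a : ℝ}
    (hf : ∀ x, HasDerivAt f (f' x) x) (hf' : ∀ x, a < x → 0 ≤ f' x) :
    MonotoneOn f (Ici a) :=
  monotoneOn_of_hasDerivWithinAt_nonneg (convex_Ici a)
    (fun x _ ↦ (hf x).continuousAt.continuousWithinAt)
    (fun x _ ↦ (hf x).hasDerivWithinAt)
    (fun x hx ↦ hf' x (by simpa using hx))

namespace Real

lemma sinh_le_mul_cosh {x : ℝ} (hx : 0 ≤ x) : sinh x ≤ x * cosh x := by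
  have hderiv (y : ℝ) : HasDerivAt (fun y ↦ y * cosh y - sinh y) (y * sinh y) y := by
    refine (((hasDerivAt_id' y).mul (hasDerivAt_cosh y)).sub (hasDerivAt_sinh y)).congr_deriv ?_
    ring
  have hmono := monotoneOn_Ici_of_hasDerivAt_nonneg hderiv
    fun y hy ↦ mul_nonneg hy.le (sinh_nonneg_iff.mpr hy.le)
  simpa using hmono self_mem_Ici hx hx

lemma mul_cosh_le_one_add_sq_div_three_mul_sinh {x : ℝ} (hx : 0 ≤ x) :
    x * cosh x ≤ (1 + x ^ 2 / 3) * sinh x := by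
  have hderiv (y : ℝ) : HasDerivAt (fun y ↦ (3 + y ^ 2) * sinh y - 3 * (y * cosh y))
      (y * (y * cosh y - sinh y)) y := by
    refine ((((hasDerivAt_pow 2 y).const_add 3).mul (hasDerivAt_sinh y)).sub
      (((hasDerivAt_id' y).mul (hasDerivAt_cosh y)).const_mul 3)).congr_deriv ?_
    ring
  have hmono := monotoneOn_Ici_of_hasDerivAt_nonneg hderiv
    fun y hy ↦ mul_nonneg hy.le (sub_nonneg.mpr (sinh_le_mul_cosh hy.le))
  have := hmono self_mem_Ici hx hx
  simp only [sinh_zero, cosh_zero] at this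
  linarith

lemma self_le_one_add_sq_div_three_mul_tanh {x : ℝ} (hx : 0 ≤ x) :
    x ≤ (1 + x ^ 2 / 3) * tanh x := by
  rw [tanh_eq_sinh_div_cosh, mul_div_assoc', le_div_iff₀ (cosh_pos x)]
  exact mul_cosh_le_one_add_sq_div_three_mul_sinh hx

lemma tanh_le_tanh {x y : ℝ} (hxy : x ≤ y) : tanh x ≤ tanh y := by
  rw [tanh_eq_sinh_div_cosh, tanh_eq_sinh_div_cosh, div_le_div_iff₀ (cosh_pos x) (cosh_pos y)]
  have : sinh (x - y) ≤ 0 := sinh_nonpos_iff.mpr (sub_nonpos.mpr hxy)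
  rw [sinh_sub] at this
  linarith

lemma tanh_nonneg {x : ℝ} (hx : 0 ≤ x) : 0 ≤ tanh x := by
  simpa using tanh_le_tanh hx

lemma monotoneOn_tanh_mul_self : MonotoneOn (fun x ↦ tanh x * x) (Ici 0) :=
  fun _ hx _ _ hxy ↦ mul_le_mul (tanh_le_tanh hxy) hxy hx (tanh_nonneg (le_trans hx hxy))

end Real

lemma sq_div_add_tanh_mul_self_le {β γ ξ s : ℝ} (hβ : 1 / 3 ≤ β) (hγ : 0 ≤ γ) (hs : |ξ| ≤ s) :
    ξ ^ 2 / (γ + tanh s * s) ≤ 1 + β * ξ ^ 2 := by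
  set t := |ξ|
  have ht : 0 ≤ t := abs_nonneg ξ
  have hmono : tanh t * t ≤ tanh s * s := monotoneOn_tanh_mul_self ht (ht.trans hs) hs
  have htanh : 0 ≤ tanh t * t := mul_nonneg (tanh_nonneg ht) ht
  have hβt : 1 + t ^ 2 / 3 ≤ 1 + β * t ^ 2 := by nlinarith [sq_nonneg t]
  rw [← sq_abs ξ]
  refine div_le_of_le_mul₀ (by linarith) (by positivity) ?_
  calc t ^ 2 = t * t := sq t
    _ ≤ ((1 + t ^ 2 / 3) * tanh t) * t :=
        mul_le_mul_of_nonneg_right (self_le_one_add_sq_div_three_mul_tanh ht) ht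
    _ = (1 + t ^ 2 / 3) * (tanh t * t) := by ring
    _ ≤ (1 + β * t ^ 2) * (γ + tanh s * s) :=
        mul_le_mul hβt (by linarith) htanh (by positivity)

theorem stmt9_general (β α γ ξ k : ℝ) (hβ : 1/3 < β) (hγ : 0 ≤ γ) :
    β * ξ ^ 2 + β * k ^ 2 + α + γ
      - ξ ^ 2 / (γ + Real.tanh (Real.sqrt (ξ ^ 2 + k ^ 2)) * Real.sqrt (ξ ^ 2 + k ^ 2))
      ≥ β * k ^ 2 + α + γ - 1 := by
  have hs : |ξ| ≤ √(ξ ^ 2 + k ^ 2) := abs_le_sqrt (by nlinarith [sq_nonneg k])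
  linarith [sq_div_add_tanh_mul_self_le hβ.le hγ hs]

theorem stmt9 (β α γ ξ k : ℝ) (hβ : 1/3 < β) (hα : 1 ≤ α) (hγ : 0 ≤ γ) (hξ : ξ ≠ 0) :
    β * ξ ^ 2 + β * k ^ 2 + α + γ
      - ξ ^ 2 / (γ + Real.tanh (Real.sqrt (ξ ^ 2 + k ^ 2)) * Real.sqrt (ξ ^ 2 + k ^ 2))
      ≥ β * k ^ 2 + α + γ - 1 :=
  stmt9_general β α γ ξ k hβ hγ
end

section
/- Let L be an n×n complex Hermitian matrix and J an n×n real skew-symmetric matrix. Suppose J L u₁ = σ₁ u₁ and J L u₂ = σ₂ u₂ with Re(σ₁) > 0 and Re(σ₂) > 0. Then ⟨L u₁, u₂⟩ = 0 with respect to the complex inner product on ℂⁿ. -/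
/-!
Pairing the eigen-equations with `L` gives `σ₁ ⟪u₂, L u₁⟫ = ⟪u₂, L J L u₁⟫` and
`conj σ₂ ⟪u₂, L u₁⟫ = ⟪J L u₂, L u₁⟫ = -⟪u₂, L J L u₁⟫`, since `(J L)ᴴ = -L J`.
Hence `(σ₁ + conj σ₂) ⟪u₂, L u₁⟫ = 0`, and `σ₁ + conj σ₂` has real part `Re σ₁ + Re σ₂ > 0`.
-/

open Matrix

namespace Matrix

variable {ι R : Type*}

theorem conjTranspose_eq_transpose_of_im_eq_zero {J : Matrix ι ι ℂ}
    (hJ : ∀ i j, (J i j).im = 0) : Jᴴ = Jᵀ := by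
  ext i j
  exact Complex.conj_eq_iff_im.mpr (hJ j i)

section CommRing

variable [Fintype ι] [CommRing R] [StarRing R] {L J : Matrix ι ι R} {u₁ u₂ : ι → R} {σ₁ σ₂ : R}

theorem add_star_mul_dotProduct_mulVec_eq_zero (hL : L.IsHermitian) (hJ : Jᴴ = -J)
    (h₁ : (J * L) *ᵥ u₁ = σ₁ • u₁) (h₂ : (J * L) *ᵥ u₂ = σ₂ • u₂) :
    (σ₁ + star σ₂) * (star u₂ ⬝ᵥ L *ᵥ u₁) = 0 := by
  have hσ₁ : σ₁ * (star u₂ ⬝ᵥ L *ᵥ u₁) = star u₂ ⬝ᵥ (L * (J * L)) *ᵥ u₁ := by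
    rw [← mulVec_mulVec, h₁, mulVec_smul, dotProduct_smul, smul_eq_mul]
  have hσ₂ : star σ₂ * (star u₂ ⬝ᵥ L *ᵥ u₁) = star ((J * L) *ᵥ u₂) ⬝ᵥ L *ᵥ u₁ := by
    rw [h₂, star_smul, smul_dotProduct, smul_eq_mul]
  have hJL : (J * L)ᴴ = -(L * J) := by
    rw [conjTranspose_mul, hL.eq, hJ, mul_neg]
  rw [add_mul, hσ₁, hσ₂, star_mulVec, ← dotProduct_mulVec, mulVec_mulVec, hJL, neg_mul,
    neg_mulVec, dotProduct_neg, Matrix.mul_assoc, add_neg_cancel]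

theorem dotProduct_mulVec_eq_zero_of_add_star_ne_zero [NoZeroDivisors R]
    (hL : L.IsHermitian) (hJ : Jᴴ = -J)
    (h₁ : (J * L) *ᵥ u₁ = σ₁ • u₁) (h₂ : (J * L) *ᵥ u₂ = σ₂ • u₂)
    (hσ : σ₁ + star σ₂ ≠ 0) :
    star u₂ ⬝ᵥ L *ᵥ u₁ = 0 :=
  (mul_eq_zero.mp (add_star_mul_dotProduct_mulVec_eq_zero hL hJ h₁ h₂)).resolve_left hσ

end CommRing

end Matrix

theorem Complex.add_star_ne_zero_of_re_pos {σ₁ σ₂ : ℂ} (hσ₁ : 0 < σ₁.re) (hσ₂ : 0 < σ₂.re) :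
    σ₁ + star σ₂ ≠ 0 := by
  intro h
  have hre := congrArg Complex.re h
  simp only [Complex.add_re, Complex.star_def, Complex.conj_re, Complex.zero_re] at hre
  linarith

theorem stmt14 (n : ℕ) (L J : Matrix (Fin n) (Fin n) ℂ)
    (hL : L.IsHermitian) (hJreal : ∀ i j, (J i j).im = 0)
    (hJskew : J.transpose = -J)
    (u₁ u₂ : Fin n → ℂ) (σ₁ σ₂ : ℂ)
    (h₁ : (J * L).mulVec u₁ = σ₁ • u₁) (h₂ : (J * L).mulVec u₂ = σ₂ • u₂)
    (hσ₁ : 0 < σ₁.re) (hσ₂ : 0 < σ₂.re) :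
    dotProduct (star u₂) (L.mulVec u₁) = 0 := by
  have hJ : Jᴴ = -J := (conjTranspose_eq_transpose_of_im_eq_zero hJreal).trans hJskew
  exact dotProduct_mulVec_eq_zero_of_add_star_ne_zero hL hJ h₁ h₂
    (Complex.add_star_ne_zero_of_re_pos hσ₁ hσ₂)
end
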